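/- arXiv:1703.07170 — 2 statements merged into one kernel-verified Lean document; each statement's English description precedes it below -/
import Mathlib

section
/- Let G = (V, E) be a finite connected simple graph, s, t ∈ V with s ≠ t, and let x be a solution to the s–t path TSP subtour elimination LP. Then the family {A ⊆ V \ {t} : s ∈ A and x(δ(A)) < 2} is a chain: for any two members A, B of this family, A ⊆ B or B ⊆ A. Moreover, {s} and V \ {t} belong to this family (in fact they are its smallest and largest members). -/
open Finset
open scoped Classical

variable {V : Type*} [Fintype V]

/-- The set of edges of `G` with one endpoint in `S₁` and the other in `S₂`. -/
noncomputable def cutBetween (G : SimpleGraph V) (S₁ S₂ : Finset V) : Finset (Sym2 V) :=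
  G.edgeFinset.filter (fun e => ∃ u v, e = s(u, v) ∧ u ∈ S₁ ∧ v ∈ S₂)

/-- The cut `δ(S)`: edges of `G` with exactly one endpoint in `S`. -/
noncomputable def cut (G : SimpleGraph V) (S : Finset V) : Finset (Sym2 V) :=
  cutBetween G S Sᶜ

/-- `E(S)`: edges of `G` with both endpoints in `S`. -/
noncomputable def inducedEdges (G : SimpleGraph V) (S : Finset V) : Finset (Sym2 V) :=
  G.edgeFinset.filter (fun e => ∀ v ∈ e, v ∈ S)

/-- `T` is the edge set of a spanning tree of `G`. -/
def IsSpanningTree (G : SimpleGraph V) (T : Finset (Sym2 V)) : Prop :=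
  (T : Set (Sym2 V)) ⊆ G.edgeSet ∧ (SimpleGraph.fromEdgeSet (T : Set (Sym2 V))).IsTree

/-- Characteristic vector of a set of edges. -/
noncomputable def chi (T : Finset (Sym2 V)) : Sym2 V → ℝ :=
  fun e => if e ∈ T then 1 else 0

/-- The spanning tree polytope `Sp(G)`. -/
noncomputable def spanningTreePolytope (G : SimpleGraph V) : Set (Sym2 V → ℝ) :=
  convexHull ℝ {x | ∃ T : Finset (Sym2 V), IsSpanningTree G T ∧ x = chi T}

/-- The level sets `L_i = V_i \ V_{i-1}` of a chain `V_0 ⊊ … ⊊ V_k` (with `V_{-1} = ∅`,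
`V_{k+1} = V`). -/
noncomputable def level (Vc : ℕ → Finset V) (k : ℕ) : ℕ → Finset V :=
  fun i => if i = 0 then Vc 0 else if i ≤ k then Vc i \ Vc (i - 1) else Finset.univ \ Vc k

/-- `x` is a chain-point for the chain `V_0 ⊊ … ⊊ V_k`. -/
def IsChainPoint (G : SimpleGraph V) (Vc : ℕ → Finset V) (k : ℕ) (x : Sym2 V → ℝ) : Prop :=
  x ∈ spanningTreePolytope G ∧
  (∑ e ∈ cut G (Vc 0), x e) = 1 ∧
  (∑ e ∈ cut G (Vc k), x e) = 1 ∧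
  (∀ i, 1 ≤ i → i ≤ k - 1 → (∑ e ∈ cut G (Vc i), x e) < 2) ∧
  (∀ i, 1 ≤ i → i ≤ k →
    (∑ v ∈ level Vc k i, ∑ e ∈ cut G {v}, x e) = 2 * ((level Vc k i).card : ℝ))

/-- A Gao-tree for the chain `V_0 ⊊ … ⊊ V_k`: a spanning tree meeting each cut `δ(V_i)`
in exactly one edge. -/
def IsGaoTree (G : SimpleGraph V) (Vc : ℕ → Finset V) (k : ℕ) (T : Finset (Sym2 V)) : Prop :=
  IsSpanningTree G T ∧ ∀ i ≤ k, (T ∩ cut G (Vc i)).card = 1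

/-- A Gao-tree for the subchain of `V_0 ⊊ … ⊊ V_k` given by the index set `I`. -/
def IsGaoTreeOn (G : SimpleGraph V) (Vc : ℕ → Finset V) (I : Finset ℕ)
    (T : Finset (Sym2 V)) : Prop :=
  IsSpanningTree G T ∧ ∀ i ∈ I, (T ∩ cut G (Vc i)).card = 1

/-- `Sp_𝒞(G)`: the convex hull of characteristic vectors of Gao-trees. -/
noncomputable def gaoPolytope (G : SimpleGraph V) (Vc : ℕ → Finset V) (k : ℕ) :
    Set (Sym2 V → ℝ) :=
  convexHull ℝ {x | ∃ T : Finset (Sym2 V), IsGaoTree G Vc k T ∧ x = chi T}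

/-- `F` is the edge set of a spanning tree of the induced subgraph `G(U)`. -/
def IsSpanningTreeOfInduced (G : SimpleGraph V) (U : Finset V) (F : Finset (Sym2 V)) : Prop :=
  (F : Set (Sym2 V)) ⊆ G.edgeSet ∧ (∀ e ∈ F, ∀ v ∈ e, v ∈ U) ∧
  F.card = U.card - 1 ∧
  ∀ u ∈ U, ∀ v ∈ U, (SimpleGraph.fromEdgeSet (F : Set (Sym2 V))).Reachable u v

/-- The rank of `X` in the cycle matroid of `G`. -/
noncomputable def cycleRank (G : SimpleGraph V) (X : Finset (Sym2 V)) : ℕ :=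
  (G.edgeFinset.powerset.filter (fun T => IsSpanningTree G T)).sup (fun T => (T ∩ X).card)

/-- The rank of `X` in the matroid whose bases are the Gao-trees. -/
noncomputable def gaoRank (G : SimpleGraph V) (Vc : ℕ → Finset V) (k : ℕ)
    (X : Finset (Sym2 V)) : ℕ :=
  (G.edgeFinset.powerset.filter (fun T => IsGaoTree G Vc k T)).sup (fun T => (T ∩ X).card)

/-- `x` is a solution of the `s`–`t` path TSP subtour elimination LP. -/
def IsSubtourLPSolution (G : SimpleGraph V) (s t : V) (x : Sym2 V → ℝ) : Prop :=
  x ∈ spanningTreePolytope G ∧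
  (∀ v, v ≠ s → v ≠ t → (∑ e ∈ cut G {v}, x e) = 2) ∧
  (∑ e ∈ cut G {s}, x e) = 1 ∧ (∑ e ∈ cut G {t}, x e) = 1

/-- Rank function of a matroid on a finite ground set, as a function on finsets. -/
noncomputable def mrank {E : Type*} [Fintype E] (M : Matroid E) (X : Finset E) : ℕ :=
  (X.powerset.filter (fun I : Finset E => M.Indep (I : Set E))).sup Finset.card

/-- Convex hull of characteristic vectors of independent sets of a matroid. -/
noncomputable def indepPolytope {E : Type*} [Fintype E] (M : Matroid E) : Set (E → ℝ) :=
  convexHull ℝ {x | ∃ I : Finset E, M.Indep (I : Set E) ∧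
    x = fun e => if e ∈ I then (1 : ℝ) else 0}
set_option linter.unusedSectionVars false

-- basic membership lemmas
lemma mem_cut_iff {G : SimpleGraph V} {S : Finset V} {a b : V}
    (hab : s(a,b) ∈ G.edgeFinset) :
    s(a,b) ∈ cut G S ↔ ((a ∈ S ∧ b ∉ S) ∨ (b ∈ S ∧ a ∉ S)) := by
  simp only [cut, cutBetween, Finset.mem_filter, hab, true_and]
  constructor
  · rintro ⟨u, v, huv, h1, h2⟩
    rw [Finset.mem_compl] at h2
    rw [Sym2.eq_iff] at huv
    rcases huv with ⟨rfl, rfl⟩ | ⟨rfl, rfl⟩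
    · exact Or.inl ⟨h1, h2⟩
    · exact Or.inr ⟨h1, h2⟩
  · rintro (⟨h1, h2⟩ | ⟨h1, h2⟩)
    · exact ⟨a, b, rfl, h1, Finset.mem_compl.2 h2⟩
    · exact ⟨b, a, Sym2.eq_swap.symm, h1, Finset.mem_compl.2 h2⟩

lemma mem_inducedEdges_iff {G : SimpleGraph V} {S : Finset V} {a b : V}
    (hab : s(a,b) ∈ G.edgeFinset) :
    s(a,b) ∈ inducedEdges G S ↔ (a ∈ S ∧ b ∈ S) := by
  simp only [inducedEdges, Finset.mem_filter, hab, true_and]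
  constructor
  · intro h; exact ⟨h a (by simp), h b (by simp)⟩
  · rintro ⟨h1, h2⟩ v hv
    rcases Sym2.mem_iff.1 hv with rfl | rfl <;> assumption

lemma cut_subset {G : SimpleGraph V} (S : Finset V) : cut G S ⊆ G.edgeFinset :=
  Finset.filter_subset _ _

lemma inducedEdges_subset {G : SimpleGraph V} (S : Finset V) :
    inducedEdges G S ⊆ G.edgeFinset := Finset.filter_subset _ _

lemma cutBetween_comm {G : SimpleGraph V} (A B : Finset V) :
    cutBetween G A B = cutBetween G B A := by
  unfold cutBetween
  apply Finset.filter_congr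
  intro e _
  constructor <;> rintro ⟨u, v, huv, h1, h2⟩ <;>
    exact ⟨v, u, huv.trans Sym2.eq_swap, h2, h1⟩

lemma cut_compl {G : SimpleGraph V} (S : Finset V) : cut G Sᶜ = cut G S := by
  unfold cut
  rw [compl_compl, cutBetween_comm]

lemma isAcyclic_mono {H H' : SimpleGraph V} (h : H' ≤ H) (hH : H.IsAcyclic) :
    H'.IsAcyclic := fun v c hc => hH (c.mapLe h) (hc.mapLe h)

-- a finite acyclic graph with an edge has a vertex with a unique neighbor
lemma exists_leaf {H : SimpleGraph V} (hac : H.IsAcyclic) {u₀ v₀ : V} (huv : H.Adj u₀ v₀) :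
    ∃ a b, H.Adj a b ∧ ∀ c, H.Adj a c → c = b := by
  classical
  set L : Set ℕ := {n | ∃ (p q : V) (w : H.Walk p q), w.IsPath ∧ w.length = n} with hL
  have h1 : 1 ∈ L := ⟨u₀, v₀, SimpleGraph.Walk.cons huv SimpleGraph.Walk.nil,
    by simp [SimpleGraph.Walk.isPath_def, huv.ne], rfl⟩
  have hbdd : BddAbove L := by
    refine ⟨Fintype.card V, ?_⟩
    rintro m ⟨p, q, w, hw, rfl⟩
    exact hw.length_lt.le
  have hmem : sSup L ∈ L := Nat.sSup_mem ⟨1, h1⟩ hbdd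
  obtain ⟨p, q, w, hw, hlen⟩ := hmem
  have hpos : 1 ≤ w.length := by
    rw [hlen]; exact le_csSup hbdd h1
  cases w with
  | nil => simp at hpos
  | cons h w' =>
    rename_i c
    refine ⟨p, c, h, fun d hd => ?_⟩
    by_contra hdc
    by_cases hsup : d ∈ (SimpleGraph.Walk.cons h w').support
    · -- two distinct paths from p to d
      have hP2 : ((SimpleGraph.Walk.cons h w').takeUntil d hsup).IsPath := hw.takeUntil hsup
      have hP1 : (SimpleGraph.Walk.cons hd SimpleGraph.Walk.nil).IsPath := by
        simp [SimpleGraph.Walk.isPath_def, hd.ne]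
      have heq : SimpleGraph.Walk.cons hd SimpleGraph.Walk.nil
          = (SimpleGraph.Walk.cons h w').takeUntil d hsup := by
        have := hac.path_unique ⟨_, hP1⟩ ⟨_, hP2⟩
        exact congrArg Subtype.val this
      have hspec := (SimpleGraph.Walk.cons h w').take_spec hsup
      rw [← heq] at hspec
      have := congrArg (fun w => SimpleGraph.Walk.getVert w 1) hspec
      simp [SimpleGraph.Walk.getVert_cons_succ] at this
      exact hdc this
    · -- extend the path
      have hP : (SimpleGraph.Walk.cons hd.symm (SimpleGraph.Walk.cons h w')).IsPath :=
        hw.cons hsup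
      have hmem2 : (SimpleGraph.Walk.cons h w').length + 1 ∈ L := ⟨d, q, _, hP, by simp⟩
      have := le_csSup hbdd hmem2
      omega

lemma forest_card_bound {H : SimpleGraph V} (hH : H.IsAcyclic) :
    ∀ (F : Finset (Sym2 V)) (S : Finset V), (↑F : Set (Sym2 V)) ⊆ H.edgeSet →
      (∀ e ∈ F, ∀ v ∈ e, v ∈ S) → S.Nonempty → F.card + 1 ≤ S.card := by
  classical
  intro F
  induction F using Finset.strongInduction with
  | _ F ih =>
    intro S hFE hFS hS
    rcases Finset.eq_empty_or_nonempty F with rfl | ⟨e0, he0⟩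
    · simpa using hS.card_pos
    -- the subgraph with edge set F
    set H' : SimpleGraph V := SimpleGraph.fromEdgeSet (↑F) with hH'
    have hle : H' ≤ H := by
      rw [hH', ← SimpleGraph.fromEdgeSet_edgeSet (G := H)]
      exact SimpleGraph.fromEdgeSet_mono hFE
    have hac' : H'.IsAcyclic := isAcyclic_mono hle hH
    -- F has an edge, giving adjacency in H'
    have hnd : ∀ e ∈ F, ¬ e.IsDiag := fun e he =>
      SimpleGraph.not_isDiag_of_mem_edgeSet H (hFE he)
    obtain ⟨a0, b0⟩ := e0
    have hadj0 : H'.Adj a0 b0 := by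
      rw [hH', SimpleGraph.fromEdgeSet_adj]
      exact ⟨he0, fun hh => hnd _ he0 (by simp [hh])⟩
    obtain ⟨a, b, hab, huniq⟩ := exists_leaf hac' hadj0
    have habF : s(a, b) ∈ F := by
      have := hab
      rw [hH', SimpleGraph.fromEdgeSet_adj] at this
      exact this.1
    -- every edge of F containing a is s(a,b)
    have hunique_edge : ∀ e ∈ F, a ∈ e → e = s(a, b) := by
      intro e he hae
      obtain ⟨u, v⟩ := e
      rcases Sym2.mem_iff.1 hae with rfl | rfl
      · have : H'.Adj a v := by
          rw [hH', SimpleGraph.fromEdgeSet_adj]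
          exact ⟨he, fun hh => hnd _ he (by simp [hh])⟩
        rw [huniq v this]
      · have : H'.Adj a u := by
          rw [hH', SimpleGraph.fromEdgeSet_adj]
          refine ⟨by rwa [Sym2.eq_swap], fun hh => hnd _ he (by simp [hh])⟩
        rw [huniq u this, Sym2.eq_swap]
    have haS : a ∈ S := hFS _ habF a (by simp)
    have hbS : b ∈ S := hFS _ habF b (by simp)
    have hba : b ≠ a := hab.ne'
    -- apply induction to F.erase s(a,b) and S.erase a
    have hcard := ih (F.erase s(a, b)) (Finset.erase_ssubset habF) (S.erase a)
      (fun e he => hFE (Finset.mem_of_mem_erase he))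
      (fun e he v hv => by
        refine Finset.mem_erase.2 ⟨?_, hFS _ (Finset.mem_of_mem_erase he) v hv⟩
        rintro rfl
        exact (Finset.mem_erase.1 he).1 (hunique_edge _ (Finset.mem_of_mem_erase he) hv))
      ⟨b, Finset.mem_erase.2 ⟨hba, hbS⟩⟩
    rw [Finset.card_erase_of_mem habF, Finset.card_erase_of_mem haS] at hcard
    have h1 : 1 ≤ F.card := Finset.card_pos.2 ⟨_, habF⟩
    have h2 : 1 ≤ S.card := Finset.card_pos.2 ⟨a, haS⟩
    omega

lemma polytope_nonneg {G : SimpleGraph V} {x : Sym2 V → ℝ}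
    (hx : x ∈ spanningTreePolytope G) (e : Sym2 V) : 0 ≤ x e := by
  have hconv : Convex ℝ {y : Sym2 V → ℝ | 0 ≤ y e} :=
    convex_halfSpace_ge ⟨fun a b => rfl, fun c a => rfl⟩ 0
  refine convexHull_min ?_ hconv hx
  rintro y ⟨T, hT, rfl⟩
  simp only [chi, Set.mem_setOf_eq]
  split <;> norm_num

lemma polytope_induced_le {G : SimpleGraph V} {x : Sym2 V → ℝ}
    (hx : x ∈ spanningTreePolytope G) {S : Finset V} (hS : S.Nonempty) :
    (∑ e ∈ inducedEdges G S, x e) ≤ (S.card : ℝ) - 1 := by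
  have hconv : Convex ℝ {y : Sym2 V → ℝ | (∑ e ∈ inducedEdges G S, y e) ≤ (S.card : ℝ) - 1} := by
    refine convex_halfSpace_le ⟨fun a b => ?_, fun c a => ?_⟩ _
    · simp [Finset.sum_add_distrib]
    · simp [Finset.mul_sum]
  refine convexHull_min ?_ hconv hx
  rintro y ⟨T, hT, rfl⟩
  simp only [chi, Set.mem_setOf_eq]
  rw [Finset.sum_ite_mem, Finset.sum_const, nsmul_eq_mul, mul_one]
  -- bound the number of tree edges inside S
  have hacyc : (SimpleGraph.fromEdgeSet (↑T : Set (Sym2 V))).IsAcyclic := hT.2.IsAcyclic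
  have hbound := forest_card_bound hacyc (inducedEdges G S ∩ T) S
    (fun e he => by
      rw [SimpleGraph.edgeSet_fromEdgeSet]
      have heT : e ∈ T := (Finset.mem_inter.1 he).2
      exact ⟨heT, SimpleGraph.not_isDiag_of_mem_edgeSet G (hT.1 heT)⟩)
    (fun e he v hv => by
      have := (Finset.mem_inter.1 he).1
      exact (Finset.mem_filter.1 this).2 v hv)
    hS
  have : ((inducedEdges G S ∩ T).card : ℝ) + 1 ≤ (S.card : ℝ) := by exact_mod_cast hbound
  linarith

lemma sum_cut_eq {G : SimpleGraph V} (x : Sym2 V → ℝ) (S : Finset V) :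
    (∑ e ∈ cut G S, x e) = ∑ e ∈ G.edgeFinset, (if e ∈ cut G S then x e else 0) := by
  rw [Finset.sum_ite_mem, Finset.inter_eq_right.2 (cut_subset S)]

lemma sum_induced_eq {G : SimpleGraph V} (x : Sym2 V → ℝ) (S : Finset V) :
    (∑ e ∈ inducedEdges G S, x e)
      = ∑ e ∈ G.edgeFinset, (if e ∈ inducedEdges G S then x e else 0) := by
  rw [Finset.sum_ite_mem, Finset.inter_eq_right.2 (inducedEdges_subset S)]

lemma degree_sum_identity (G : SimpleGraph V) (x : Sym2 V → ℝ) (S : Finset V) :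
    (∑ v ∈ S, ∑ e ∈ cut G {v}, x e)
      = (∑ e ∈ cut G S, x e) + 2 * ∑ e ∈ inducedEdges G S, x e := by
  rw [sum_cut_eq x S, sum_induced_eq x S, Finset.mul_sum, ← Finset.sum_add_distrib]
  calc (∑ v ∈ S, ∑ e ∈ cut G {v}, x e)
      = ∑ v ∈ S, ∑ e ∈ G.edgeFinset, (if e ∈ cut G {v} then x e else 0) :=
        Finset.sum_congr rfl fun v _ => sum_cut_eq x {v}
    _ = ∑ e ∈ G.edgeFinset, ∑ v ∈ S, (if e ∈ cut G {v} then x e else 0) := Finset.sum_comm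
    _ = _ := by
        refine Finset.sum_congr rfl fun e he => ?_
        obtain ⟨a, b⟩ := e
        have hadj : G.Adj a b := by rwa [SimpleGraph.mem_edgeFinset, SimpleGraph.mem_edgeSet] at he
        have hne : a ≠ b := hadj.ne
        have hstep : ∀ v ∈ S, (if s(a,b) ∈ cut G {v} then x s(a,b) else 0)
            = (if v = a then x s(a,b) else 0) + (if v = b then x s(a,b) else 0) := by
          intro v _
          simp only [mem_cut_iff he, Finset.mem_singleton]
          by_cases hva : v = a <;> by_cases hvb : v = b <;>
            simp [hva, hvb, hne, Ne.symm hne] <;> aesop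
        rw [Finset.sum_congr rfl hstep, Finset.sum_add_distrib]
        simp only [mem_cut_iff he, mem_inducedEdges_iff he, Finset.sum_ite_eq' S,
          Finset.sum_ite_eq]
        by_cases ha : a ∈ S <;> by_cases hb : b ∈ S <;> simp [ha, hb] <;> ring

lemma cut_submodular (G : SimpleGraph V) {x : Sym2 V → ℝ} (hx0 : ∀ e, 0 ≤ x e)
    (A B : Finset V) :
    (∑ e ∈ cut G (A \ B), x e) + (∑ e ∈ cut G (B \ A), x e)
      ≤ (∑ e ∈ cut G A, x e) + (∑ e ∈ cut G B, x e) := by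
  rw [sum_cut_eq x A, sum_cut_eq x B, sum_cut_eq x (A \ B), sum_cut_eq x (B \ A),
    ← Finset.sum_add_distrib, ← Finset.sum_add_distrib]
  refine Finset.sum_le_sum fun e he => ?_
  obtain ⟨a, b⟩ := e
  simp only [mem_cut_iff he, Finset.mem_sdiff]
  have := hx0 s(a,b)
  by_cases ha : a ∈ A <;> by_cases hb : b ∈ A <;> by_cases ha' : a ∈ B <;>
    by_cases hb' : b ∈ B <;> simp [ha, hb, ha', hb'] <;> linarith

lemma cut_ge_two {G : SimpleGraph V} {s t : V} {x : Sym2 V → ℝ}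
    (hx : IsSubtourLPSolution G s t x) {S : Finset V} (hS : S.Nonempty)
    (hs : s ∉ S) (ht : t ∉ S) : 2 ≤ ∑ e ∈ cut G S, x e := by
  have hdeg : (∑ v ∈ S, ∑ e ∈ cut G {v}, x e) = 2 * (S.card : ℝ) := by
    rw [Finset.sum_congr rfl fun v hv =>
      hx.2.1 v (fun h => hs (h ▸ hv)) (fun h => ht (h ▸ hv))]
    rw [Finset.sum_const, nsmul_eq_mul]
    ring
  have hid := degree_sum_identity G x S
  have hind := polytope_induced_le hx.1 hS
  linarith [hdeg ▸ hid]


theorem stmt8 (G : SimpleGraph V) (hG : G.Connected)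
    (s t : V) (hst : s ≠ t)
    (x : Sym2 V → ℝ) (hx : IsSubtourLPSolution G s t x) :
    (∀ A B : Finset V, s ∈ A → t ∉ A → (∑ e ∈ cut G A, x e) < 2 →
      s ∈ B → t ∉ B → (∑ e ∈ cut G B, x e) < 2 → A ⊆ B ∨ B ⊆ A) ∧
    (s ∈ ({s} : Finset V) ∧ t ∉ ({s} : Finset V) ∧ (∑ e ∈ cut G {s}, x e) < 2) ∧
    (s ∈ Finset.univ \ {t} ∧ t ∉ Finset.univ \ {t} ∧
      (∑ e ∈ cut G (Finset.univ \ {t}), x e) < 2) ∧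
    (∀ A : Finset V, s ∈ A → t ∉ A → (∑ e ∈ cut G A, x e) < 2 →
      {s} ⊆ A ∧ A ⊆ Finset.univ \ {t}) := by
  
  have hx0 : ∀ e, 0 ≤ x e := polytope_nonneg hx.1
  refine ⟨?_, ⟨Finset.mem_singleton_self s, ?_, by rw [hx.2.2.1]; norm_num⟩, ⟨?_, ?_, ?_⟩, ?_⟩
  · intro A B hsA htA hA hsB htB hB
    by_contra hcon
    push_neg at hcon
    obtain ⟨hAB, hBA⟩ := hcon
    obtain ⟨a, haA, haB⟩ := Finset.not_subset.1 hAB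
    obtain ⟨b, hbB, hbA⟩ := Finset.not_subset.1 hBA
    have h1 : 2 ≤ ∑ e ∈ cut G (A \ B), x e :=
      cut_ge_two hx ⟨a, Finset.mem_sdiff.2 ⟨haA, haB⟩⟩
        (fun h => (Finset.mem_sdiff.1 h).2 hsB) (fun h => htA (Finset.mem_sdiff.1 h).1)
    have h2 : 2 ≤ ∑ e ∈ cut G (B \ A), x e :=
      cut_ge_two hx ⟨b, Finset.mem_sdiff.2 ⟨hbB, hbA⟩⟩
        (fun h => (Finset.mem_sdiff.1 h).2 hsA) (fun h => htB (Finset.mem_sdiff.1 h).1)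
    have h3 := cut_submodular G hx0 A B
    linarith
  · simp [Ne.symm hst]
  · simp [hst]
  · simp
  · have hcc : cut G (Finset.univ \ {t}) = cut G {t} := by
      rw [← Finset.compl_eq_univ_sdiff, cut_compl]
    rw [hcc, hx.2.2.2]; norm_num
  · intro A hsA htA _
    refine ⟨Finset.singleton_subset_iff.2 hsA, fun a ha => Finset.mem_sdiff.2
      ⟨Finset.mem_univ a, fun h => htA ((Finset.mem_singleton.1 h) ▸ ha)⟩⟩
end

section
/- Let x be a chain-point for the chain V_0 ⊊ V_1 ⊊ … ⊊ V_k. Let A ⊆ V with x(E(A)) = |A| − 1, and let i ∈ {0,…,k} be such that E(A) ∩ δ(V_i) ≠ ∅. Then x(E(A) ∩ δ(V_i)) ≥ 1. Consequently, if A, B ⊆ V are disjoint sets with x(E(A)) = |A| − 1 and x(E(B)) = |B| − 1, then there is no i ∈ {0,…,k} with both E(A) ∩ δ(V_i) ≠ ∅ and E(B) ∩ δ(V_i) ≠ ∅. -/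
open Finset
open scoped Classical

variable {V : Type*} [Fintype V]

/-! A point `x` of the spanning tree polytope is nonnegative and satisfies
`x(E(S)) ≤ |S| - 1` for every nonempty `S`, because the edges of a spanning tree inside `S`
form a forest on `S`. If `A` is tight and some edge of `E(A)` crosses `W`, then `A ∩ W` and
`A \ W` are both nonempty, and splitting `E(A)` into `E(A ∩ W)`, `E(A \ W)` and the crossing
edges forces the crossing part to carry at least `1`. Two disjoint tight sets crossing the same
`δ(V_i)` would thus give `x(δ(V_i)) ≥ 2`, while a chain-point has `x(δ(V_i)) < 2` for all
`i ≤ k`. -/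

namespace SimpleGraph

lemma IsAcyclic.card_edgeFinset_lt {W : Type*} [Fintype W] [Nonempty W] {H : SimpleGraph W}
    [Fintype H.edgeSet] (hH : H.IsAcyclic) : #H.edgeFinset < Fintype.card W := by
  obtain ⟨F, hHF, -, hF⟩ := connected_top.exists_isTree_le_of_le_of_isAcyclic le_top hH
  have hmono : #H.edgeFinset ≤ #F.edgeFinset := card_le_card (edgeFinset_mono hHF)
  have := hF.card_edgeFinset
  omega

lemma IsAcyclic.card_edgeFinset_inter_sym2_lt {H : SimpleGraph V} (hH : H.IsAcyclic)
    {S : Finset V} (hS : S.Nonempty) : #(H.edgeFinset ∩ S.sym2) < #S := by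
  have : Nonempty (S : Set V) := hS.coe_sort
  have hmap := map_edgeFinset_induce (G := H) (s := (S : Set V))
  rw [Finset.toFinset_coe] at hmap
  rw [← hmap, card_map]
  convert (hH.induce (S : Set V)).card_edgeFinset_lt
  exact (Fintype.card_coe S).symm

end SimpleGraph

section Polytope

variable {G : SimpleGraph V}

lemma mk_mem_inducedEdges {S : Finset V} {a b : V} :
    s(a, b) ∈ inducedEdges G S ↔ G.Adj a b ∧ a ∈ S ∧ b ∈ S := by
  simp [inducedEdges]

lemma mk_mem_cut {W : Finset V} {a b : V} :
    s(a, b) ∈ cut G W ↔ G.Adj a b ∧ (a ∈ W ↔ b ∉ W) := by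
  simp only [cut, cutBetween, mem_filter, SimpleGraph.mem_edgeFinset, SimpleGraph.mem_edgeSet,
    mem_compl, Sym2.eq_iff]
  constructor
  · rintro ⟨hab, u, v, (⟨rfl, rfl⟩ | ⟨rfl, rfl⟩), hu, hv⟩ <;> tauto
  · rintro ⟨hab, hW⟩
    by_cases ha : a ∈ W
    · exact ⟨hab, a, b, by tauto⟩
    · exact ⟨hab, b, a, by tauto⟩

lemma IsSpanningTree.card_inter_inducedEdges_lt {T : Finset (Sym2 V)} (hT : IsSpanningTree G T)
    {S : Finset V} (hS : S.Nonempty) : #(T ∩ inducedEdges G S) < #S := by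
  refine lt_of_le_of_lt (card_le_card ?_) (hT.2.isAcyclic.card_edgeFinset_inter_sym2_lt hS)
  intro e he
  obtain ⟨heT, heS⟩ := mem_inter.1 he
  have heG : e ∈ G.edgeSet := hT.1 heT
  simp only [inducedEdges, mem_filter] at heS
  simp only [mem_inter, SimpleGraph.mem_edgeFinset, SimpleGraph.edgeSet_fromEdgeSet,
    mem_sym2_iff]
  exact ⟨⟨heT, G.not_isDiag_of_mem_edgeSet heG⟩, heS.2⟩

lemma nonneg_of_mem_spanningTreePolytope {α : Type*} {H : SimpleGraph α} {x : Sym2 α → ℝ}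
    (hx : x ∈ spanningTreePolytope H) (e : Sym2 α) : 0 ≤ x e := by
  refine convexHull_min ?_ (convex_halfSpace_ge (f := fun y : Sym2 α → ℝ => y e)
    ⟨fun _ _ => rfl, fun _ _ => rfl⟩ 0) hx
  rintro y ⟨T, -, rfl⟩
  simp only [Set.mem_ofPred_eq, chi]
  split <;> norm_num

lemma sum_inducedEdges_le_of_mem_spanningTreePolytope {x : Sym2 V → ℝ}
    (hx : x ∈ spanningTreePolytope G) {S : Finset V} (hS : S.Nonempty) :
    ∑ e ∈ inducedEdges G S, x e ≤ #S - 1 := by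
  refine convexHull_min ?_ (convex_halfSpace_le
    (f := fun y : Sym2 V → ℝ => ∑ e ∈ inducedEdges G S, y e)
    ⟨fun _ _ => sum_add_distrib, fun _ _ => by simp [mul_sum]⟩ (#S - 1 : ℝ)) hx
  rintro y ⟨T, hT, rfl⟩
  have hlt : (#(T ∩ inducedEdges G S) : ℝ) + 1 ≤ #S := by
    exact_mod_cast hT.card_inter_inducedEdges_lt hS
  simp only [Set.mem_ofPred_eq, chi, sum_boole, filter_mem_eq_inter, inter_comm]
  linarith

lemma disjoint_inducedEdges {A B : Finset V} (h : Disjoint A B) :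
    Disjoint (inducedEdges G A) (inducedEdges G B) := by
  rw [disjoint_left]
  intro e
  induction e using Sym2.ind with
  | _ a b =>
    simp only [mk_mem_inducedEdges]
    exact fun ha hb => disjoint_left.1 h ha.2.1 hb.2.1

lemma sum_inducedEdges_eq_add_sum_inter_cut (x : Sym2 V → ℝ) (A W : Finset V) :
    ∑ e ∈ inducedEdges G A, x e = ∑ e ∈ inducedEdges G (A ∩ W), x e +
      ∑ e ∈ inducedEdges G (A \ W), x e + ∑ e ∈ inducedEdges G A ∩ cut G W, x e := by
  have hsplit : (inducedEdges G A).filter (· ∉ cut G W) =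
      inducedEdges G (A ∩ W) ∪ inducedEdges G (A \ W) := by
    ext e
    induction e using Sym2.ind with
    | _ a b =>
      simp only [mem_filter, mem_union, mk_mem_inducedEdges, mk_mem_cut, mem_inter, mem_sdiff]
      tauto
  have hdisj := disjoint_inducedEdges (G := G) (disjoint_sdiff_inter A W).symm
  rw [← sum_union hdisj, ← hsplit, ← filter_mem_eq_inter, sum_filter_not_add_sum_filter]

variable {x : Sym2 V → ℝ} (hx : x ∈ spanningTreePolytope G)
include hx

lemma one_le_sum_inducedEdges_inter_cut {A W : Finset V}
    (hA : ∑ e ∈ inducedEdges G A, x e = #A - 1) (hAW : (inducedEdges G A ∩ cut G W).Nonempty) :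
    1 ≤ ∑ e ∈ inducedEdges G A ∩ cut G W, x e := by
  obtain ⟨e, he⟩ := hAW
  induction e using Sym2.ind with
  | _ a b =>
    simp only [mem_inter, mk_mem_inducedEdges, mk_mem_cut] at he
    obtain ⟨⟨-, ha, hb⟩, -, hab⟩ := he
    have hsides : (A ∩ W).Nonempty ∧ (A \ W).Nonempty := by
      by_cases haW : a ∈ W
      · exact ⟨⟨a, mem_inter.2 ⟨ha, haW⟩⟩, ⟨b, mem_sdiff.2 ⟨hb, hab.1 haW⟩⟩⟩
      · exact ⟨⟨b, mem_inter.2 ⟨hb, not_not.1 (mt hab.2 haW)⟩⟩, ⟨a, mem_sdiff.2 ⟨ha, haW⟩⟩⟩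
    have hin := sum_inducedEdges_le_of_mem_spanningTreePolytope hx hsides.1
    have hout := sum_inducedEdges_le_of_mem_spanningTreePolytope hx hsides.2
    have hcard : (#(A ∩ W) : ℝ) + #(A \ W) = #A := by
      exact_mod_cast card_inter_add_card_sdiff A W
    linarith [sum_inducedEdges_eq_add_sum_inter_cut (G := G) x A W]

lemma not_inducedEdges_inter_cut_nonempty_and {A B W : Finset V} (hAB : Disjoint A B)
    (hA : ∑ e ∈ inducedEdges G A, x e = #A - 1) (hB : ∑ e ∈ inducedEdges G B, x e = #B - 1)
    (hW : ∑ e ∈ cut G W, x e < 2) :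
    ¬ ((inducedEdges G A ∩ cut G W).Nonempty ∧ (inducedEdges G B ∩ cut G W).Nonempty) := by
  rintro ⟨hAW, hBW⟩
  have hdisj : Disjoint (inducedEdges G A ∩ cut G W) (inducedEdges G B ∩ cut G W) :=
    (disjoint_inducedEdges hAB).mono inter_subset_left inter_subset_left
  have hle : 2 ≤ ∑ e ∈ cut G W, x e :=
    calc (2 : ℝ)
        ≤ ∑ e ∈ inducedEdges G A ∩ cut G W, x e + ∑ e ∈ inducedEdges G B ∩ cut G W, x e := by
          linarith [one_le_sum_inducedEdges_inter_cut hx hA hAW,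
            one_le_sum_inducedEdges_inter_cut hx hB hBW]
      _ = ∑ e ∈ (inducedEdges G A ∩ cut G W) ∪ (inducedEdges G B ∩ cut G W), x e :=
          (sum_union hdisj).symm
      _ ≤ ∑ e ∈ cut G W, x e :=
          sum_le_sum_of_subset_of_nonneg (union_subset inter_subset_right inter_subset_right)
            fun e _ _ => nonneg_of_mem_spanningTreePolytope hx e
  linarith

end Polytope

lemma IsChainPoint.sum_cut_lt_two {G : SimpleGraph V} {Vc : ℕ → Finset V} {k : ℕ}
    {x : Sym2 V → ℝ} (hx : IsChainPoint G Vc k x) {i : ℕ} (hi : i ≤ k) :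
    ∑ e ∈ cut G (Vc i), x e < 2 := by
  obtain ⟨-, h0, hk, hmid, -⟩ := hx
  rcases Nat.eq_zero_or_pos i with rfl | hpos
  · linarith
  rcases hi.eq_or_lt with rfl | hlt
  · linarith
  exact hmid i hpos (by omega)

theorem stmt13_general (G : SimpleGraph V)
    (Vc : ℕ → Finset V) (k : ℕ)
    (x : Sym2 V → ℝ) (hx : IsChainPoint G Vc k x) :
    (∀ A : Finset V, (∑ e ∈ inducedEdges G A, x e) = (A.card : ℝ) - 1 →
      ∀ i ≤ k, (inducedEdges G A ∩ cut G (Vc i)).Nonempty →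
        1 ≤ ∑ e ∈ inducedEdges G A ∩ cut G (Vc i), x e) ∧
    (∀ A B : Finset V, Disjoint A B →
      (∑ e ∈ inducedEdges G A, x e) = (A.card : ℝ) - 1 →
      (∑ e ∈ inducedEdges G B, x e) = (B.card : ℝ) - 1 →
      ¬ ∃ i ≤ k, (inducedEdges G A ∩ cut G (Vc i)).Nonempty ∧
        (inducedEdges G B ∩ cut G (Vc i)).Nonempty) := by
  refine ⟨fun A hA i _ hAi => one_le_sum_inducedEdges_inter_cut hx.1 hA hAi, ?_⟩
  rintro A B hAB hA hB ⟨i, hi, hAi, hBi⟩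
  exact not_inducedEdges_inter_cut_nonempty_and hx.1 hAB hA hB (hx.sum_cut_lt_two hi) ⟨hAi, hBi⟩

theorem stmt13 (G : SimpleGraph V) (hG : G.Connected)
    (Vc : ℕ → Finset V) (k : ℕ)
    (hne : (Vc 0).Nonempty) (hchain : ∀ i < k, Vc i ⊂ Vc (i + 1))
    (htop : Vc k ⊂ Finset.univ)
    (x : Sym2 V → ℝ) (hx : IsChainPoint G Vc k x) :
    (∀ A : Finset V, (∑ e ∈ inducedEdges G A, x e) = (A.card : ℝ) - 1 →
      ∀ i ≤ k, (inducedEdges G A ∩ cut G (Vc i)).Nonempty →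
        1 ≤ ∑ e ∈ inducedEdges G A ∩ cut G (Vc i), x e) ∧
    (∀ A B : Finset V, Disjoint A B →
      (∑ e ∈ inducedEdges G A, x e) = (A.card : ℝ) - 1 →
      (∑ e ∈ inducedEdges G B, x e) = (B.card : ℝ) - 1 →
      ¬ ∃ i ≤ k, (inducedEdges G A ∩ cut G (Vc i)).Nonempty ∧
        (inducedEdges G B ∩ cut G (Vc i)).Nonempty) :=
  stmt13_general G Vc k x hx
end
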